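/- Let g ≥ 1. If B : ℚ^{2g} × ℚ^{2g} → ℚ is a symmetric bilinear form invariant under the integral symplectic group, i.e. B(Mx, My) = B(x, y) for every M ∈ Sp_{2g}(ℤ) (viewed as a rational matrix) and all x, y ∈ ℚ^{2g}, then B = 0. (This is the vanishing Sym²(H_g)^{A_g} = 0 used in the paper, in the case where the arithmetic group A_g is the full integral symplectic group; it follows from Zariski density of Sp_{2g}(ℤ) in Sp_{2g}(ℂ) together with symplectic invariant theory.) -/

import Mathlib

open Matrix

/-- The standard symplectic form matrix `J = [[0, I_g], [-I_g, 0]]` of size `2g × 2g` over `ℤ`. -/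
def symplJInt (g : ℕ) : Matrix (Fin (2 * g)) (Fin (2 * g)) ℤ :=
  fun i j =>
    if (i : ℕ) < g ∧ (j : ℕ) = (i : ℕ) + g then 1
    else if (j : ℕ) < g ∧ (i : ℕ) = (j : ℕ) + g then -1
    else 0

/-!
Write `ω(x, y) = xᵀ J y`. For a standard basis vector `e`, the transvection `x ↦ x + ω(e, x) e`
is an integral symplectic matrix, so an invariant symmetric form `B` satisfies
`ω(e, x) B(e, y) + ω(e, y) B(e, x) + ω(e, x) ω(e, y) B(e, e) = 0` for all `x, y`.
Taking `y = e` and then `y = x` with `ω(e, x) ≠ 0` gives `B(e, e) = 0`, then `2 B(e, x) = 0`,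
and finally `B(e, ·) = 0`. So `B` vanishes on the standard basis.
-/

namespace LinearMap

variable {R V : Type*} [CommRing R] [NoZeroDivisors R] [NeZero (2 : R)]
  [AddCommGroup V] [Module R V]

theorem apply_eq_zero_of_transvection_invariant (B : V →ₗ[R] V →ₗ[R] R)
    (hB : ∀ x y, B x y = B y x) {f : Module.Dual R V} {v : V} (hfv : f v = 0) (hf : f ≠ 0)
    (hinv : ∀ x y, B (transvection f v x) (transvection f v y) = B x y) :
    B v = 0 := by
  have expand : ∀ x y, f x * B v y + f y * B v x + f x * f y * B v v = 0 := by
    intro x y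
    have := hinv x y
    simp only [transvection.apply, map_add, map_smul, add_apply, smul_apply, smul_eq_mul,
      hB x v] at this
    linear_combination this
  obtain ⟨x₀, hx₀⟩ : ∃ x₀, f x₀ ≠ 0 := by
    by_contra! h
    exact hf (LinearMap.ext h)
  have hvv : B v v = 0 := by
    simpa [hfv, hx₀] using expand x₀ v
  have hvx₀ : B v x₀ = 0 := by
    have := expand x₀ x₀
    rw [hvv, mul_zero, add_zero, ← two_mul, mul_eq_zero, mul_eq_zero] at this
    exact (this.resolve_left two_ne_zero).resolve_left hx₀
  ext y
  simpa [hvv, hvx₀, hx₀] using expand x₀ y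

end LinearMap

namespace Matrix

variable {n R S : Type*} [Fintype n] [DecidableEq n] [CommRing R] [CommRing S]

def symplecticTransvection (J : Matrix n n R) (v : n → R) : Matrix n n R :=
  1 + vecMulVec v (v ᵥ* J)

theorem symplecticTransvection_mulVec (J : Matrix n n R) (v x : n → R) :
    symplecticTransvection J v *ᵥ x = LinearMap.transvection (toLinearMap₂' R J v) v x := by
  rw [symplecticTransvection, add_mulVec, one_mulVec, vecMulVec_mulVec,
    LinearMap.transvection.apply, toLinearMap₂'_apply', dotProduct_mulVec, op_smul_eq_smul]

theorem map_symplecticTransvection (J : Matrix n n R) (v : n → R) (f : R →+* S) :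
    (symplecticTransvection J v).map f = symplecticTransvection (J.map f) (f ∘ v) := by
  ext i j
  simp [symplecticTransvection, vecMulVec_apply, vecMul, dotProduct, one_apply, apply_ite]

theorem symplecticTransvection_transpose_mul_mul {J : Matrix n n R} (hJ : Jᵀ = -J) {v : n → R}
    (hv : v ⬝ᵥ J *ᵥ v = 0) :
    (symplecticTransvection J v)ᵀ * J * symplecticTransvection J v = J := by
  have hJv : J *ᵥ v = -(v ᵥ* J) := by rw [← vecMul_transpose, hJ, vecMul_neg]
  have hv' : v ᵥ* J ⬝ᵥ v = 0 := by rwa [← dotProduct_mulVec]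
  simp only [symplecticTransvection, transpose_add, transpose_one, transpose_vecMulVec, add_mul,
    mul_add, one_mul, mul_one, vecMulVec_mul, mul_vecMulVec, hJv, vecMulVec_mulVec, hv',
    MulOpposite.op_zero, zero_smul, zero_vecMulVec, neg_vecMulVec, add_zero, add_neg_cancel_right]

end Matrix

theorem symplJInt_transpose (g : ℕ) : (symplJInt g)ᵀ = -symplJInt g := by
  ext i j
  simp only [symplJInt, transpose_apply, neg_apply]
  split_ifs <;> omega

theorem symplJInt_apply_self {g : ℕ} (i : Fin (2 * g)) : symplJInt g i i = 0 := by
  simp only [symplJInt]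
  split_ifs <;> omega

theorem exists_symplJInt_apply_ne_zero {g : ℕ} (i : Fin (2 * g)) : ∃ j, symplJInt g i j ≠ 0 := by
  by_cases hi : (i : ℕ) < g
  · exact ⟨⟨i + g, by omega⟩, by simp [symplJInt, hi]⟩
  · refine ⟨⟨i - g, by omega⟩, ?_⟩
    simp only [symplJInt]
    split_ifs <;> omega

theorem sym2_integral_symplectic_invariant_vanishes_general (g : ℕ)
    (B : (Fin (2 * g) → ℚ) →ₗ[ℚ] (Fin (2 * g) → ℚ) →ₗ[ℚ] ℚ)
    (hsymm : ∀ x y, B x y = B y x)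
    (hinv : ∀ M : Matrix (Fin (2 * g)) (Fin (2 * g)) ℤ,
      Mᵀ * symplJInt g * M = symplJInt g →
      ∀ x y, B ((M.map (Int.cast : ℤ → ℚ)).mulVec x) ((M.map (Int.cast : ℤ → ℚ)).mulVec y)
        = B x y) :
    B = 0 := by
  have hbasis : ∀ i, B (Pi.single i 1) = 0 := by
    intro i
    have hM := symplecticTransvection_transpose_mul_mul (symplJInt_transpose g)
      (v := Pi.single i 1) (by simp [symplJInt_apply_self])
    have hcast : (Int.castRingHom ℚ ∘ Pi.single i 1 : Fin (2 * g) → ℚ) = Pi.single i 1 := by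
      ext k; simp [Pi.single_apply]
    have hmap := map_symplecticTransvection (symplJInt g) (Pi.single i 1) (Int.castRingHom ℚ)
    rw [hcast, Int.coe_castRingHom] at hmap
    have hT := hinv _ hM
    simp only [hmap, symplecticTransvection_mulVec] at hT
    refine LinearMap.apply_eq_zero_of_transvection_invariant B hsymm ?_ ?_ hT
    · rw [toLinearMap₂'_apply']
      simp [symplJInt_apply_self]
    · obtain ⟨j, hj⟩ := exists_symplJInt_apply_ne_zero i
      intro h
      have := LinearMap.congr_fun h (Pi.single j 1)
      rw [toLinearMap₂'_apply'] at this
      simp [hj] at this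
  refine LinearMap.pi_ext' fun i => LinearMap.ext_ring ?_
  simpa using hbasis i

/-- A symmetric bilinear form on `ℚ^{2g}` invariant under the integral symplectic group
`Sp_{2g}(ℤ)` (acting via `ℤ ⊆ ℚ`) is zero. -/
theorem sym2_integral_symplectic_invariant_vanishes (g : ℕ) (hg : 1 ≤ g)
    (B : (Fin (2 * g) → ℚ) →ₗ[ℚ] (Fin (2 * g) → ℚ) →ₗ[ℚ] ℚ)
    (hsymm : ∀ x y, B x y = B y x)
    (hinv : ∀ M : Matrix (Fin (2 * g)) (Fin (2 * g)) ℤ,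
      Mᵀ * symplJInt g * M = symplJInt g →
      ∀ x y, B ((M.map (Int.cast : ℤ → ℚ)).mulVec x) ((M.map (Int.cast : ℤ → ℚ)).mulVec y)
        = B x y) :
    B = 0 :=
  sym2_integral_symplectic_invariant_vanishes_general g B hsymm hinv
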